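/- arXiv:math/0110177 — 7 statements merged into one kernel-verified Lean document; each statement's English description precedes it below -/
import Mathlib

section
/- Let X be a finite-dimensional real inner product space and let X_a, X_b be linear subspaces with X_a ∩ X_b = {0} such that the orthogonal complements X^a and X^b satisfy X^a + X^b = X. Then there exists a constant C' > 0 such that for all w ∈ X, ⟨w^a⟩ · ⟨w^b⟩ ≥ C' · ⟨w⟩, where w^a, w^b denote the orthogonal projections of w onto X^a, X^b respectively and ⟨v⟩ = (1 + |v|²)^{1/2}. -/
/-! The map `w ↦ (w^a, w^b)` has kernel `Xa ⊓ Xb = 0`, so on the finite-dimensional space `X` it is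
bounded below: `‖w‖ ≤ K · max ‖w^a‖ ‖w^b‖`. The Japanese brackets then satisfy
`⟨w^a⟩² ⟨w^b⟩² ≥ 1 + max ‖w^a‖ ‖w^b‖ ^ 2 ≥ min 1 K⁻¹ ^ 2 · ⟨w⟩²`. -/

theorem Real.min_one_inv_mul_sqrt_one_add_sq_le {K t a b : ℝ} (hK : 0 < K) (ht : 0 ≤ t)
    (h : t ≤ K * max a b) :
    min 1 K⁻¹ * √(1 + t ^ 2) ≤ √(1 + a ^ 2) * √(1 + b ^ 2) := by
  set C := min 1 K⁻¹
  have hC : 0 ≤ C := by positivity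
  have hC_le_one : C ≤ 1 := min_le_left _ _
  have hCt : C * t ≤ max a b :=
    calc C * t ≤ K⁻¹ * (K * max a b) := mul_le_mul (min_le_right _ _) h ht (by positivity)
      _ = max a b := inv_mul_cancel_left₀ hK.ne' _
  have hmax : max a b ^ 2 ≤ a ^ 2 + b ^ 2 := by
    rcases max_cases a b with ⟨hm, -⟩ | ⟨hm, -⟩ <;> rw [hm] <;> nlinarith
  have key : C ^ 2 * (1 + t ^ 2) ≤ (1 + a ^ 2) * (1 + b ^ 2) := by
    have : (C * t) ^ 2 ≤ max a b ^ 2 := pow_le_pow_left₀ (by positivity) hCt 2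
    nlinarith [mul_nonneg (sq_nonneg a) (sq_nonneg b)]
  calc C * √(1 + t ^ 2) = √(C ^ 2 * (1 + t ^ 2)) := by
        rw [Real.sqrt_mul (sq_nonneg C), Real.sqrt_sq hC]
    _ ≤ √((1 + a ^ 2) * (1 + b ^ 2)) := Real.sqrt_le_sqrt key
    _ = √(1 + a ^ 2) * √(1 + b ^ 2) := Real.sqrt_mul (by positivity) _

theorem Submodule.exists_norm_le_mul_max_norm_starProjection_orthogonal {𝕜 E : Type*} [RCLike 𝕜]
    [NormedAddCommGroup E] [InnerProductSpace 𝕜 E] [FiniteDimensional 𝕜 E]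
    {U V : Submodule 𝕜 E} (h : U ⊓ V = ⊥) :
    ∃ K : ℝ, 0 < K ∧
      ∀ w : E, ‖w‖ ≤ K * max ‖Uᗮ.starProjection w‖ ‖Vᗮ.starProjection w‖ := by
  let f : E →L[𝕜] E × E := Uᗮ.starProjection.prod Vᗮ.starProjection
  have hker : (f : E →ₗ[𝕜] E × E).ker = ⊥ := by
    simpa [f, LinearMap.ker_prod, Submodule.orthogonal_orthogonal] using h
  obtain ⟨K, hK, hf⟩ := (f : E →ₗ[𝕜] E × E).exists_antilipschitzWith hker
  refine ⟨K, hK, fun w => ?_⟩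
  simpa [f, dist_eq_norm, Prod.norm_def] using hf.le_mul_dist w 0

theorem stmt0_general (X : Type*) [NormedAddCommGroup X] [InnerProductSpace ℝ X]
    [FiniteDimensional ℝ X]
    (Xa Xb : Submodule ℝ X) (hab : Xa ⊓ Xb = ⊥) :
    ∃ C : ℝ, 0 < C ∧ ∀ w : X,
      Real.sqrt (1 + ‖(Submodule.orthogonalProjectionOnto Xaᗮ w : X)‖ ^ 2) *
        Real.sqrt (1 + ‖(Submodule.orthogonalProjectionOnto Xbᗮ w : X)‖ ^ 2) ≥
      C * Real.sqrt (1 + ‖w‖ ^ 2) := by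
  obtain ⟨K, hK, hle⟩ := Submodule.exists_norm_le_mul_max_norm_starProjection_orthogonal hab
  refine ⟨min 1 K⁻¹, by positivity, fun w => ?_⟩
  exact Real.min_one_inv_mul_sqrt_one_add_sq_le hK (norm_nonneg w) (hle w)

/-- If `Xa ⊓ Xb = ⊥` and `Xaᗮ + Xbᗮ = X`, then there is `C' > 0` with
`⟨w^a⟩⟨w^b⟩ ≥ C'⟨w⟩` for all `w`, where `w^a, w^b` are the orthogonal projections onto
`Xaᗮ, Xbᗮ` and `⟨v⟩ = √(1+‖v‖²)`. -/
theorem stmt0 (X : Type*) [NormedAddCommGroup X] [InnerProductSpace ℝ X]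
    [FiniteDimensional ℝ X]
    (Xa Xb : Submodule ℝ X) (hab : Xa ⊓ Xb = ⊥) (hsum : Xaᗮ ⊔ Xbᗮ = ⊤) :
    ∃ C : ℝ, 0 < C ∧ ∀ w : X,
      Real.sqrt (1 + ‖(Submodule.orthogonalProjectionOnto Xaᗮ w : X)‖ ^ 2) *
        Real.sqrt (1 + ‖(Submodule.orthogonalProjectionOnto Xbᗮ w : X)‖ ^ 2) ≥
      C * Real.sqrt (1 + ‖w‖ ^ 2) :=
  stmt0_general X Xa Xb hab
end

section
/- Let X = ℝⁿ, let X_a, X_b be subspaces with X_a ∩ X_b = {0} and X^a ⊕ X^b = X (orthocomplements). For any μ > 0 there is C > 0 such that for all w ∈ X, ⟨w^b⟩^{-μ} ≤ C · ⟨w_a⟩^{-μ} · ⟨w^a⟩^{μ}, where w_a is the orthogonal projection of w onto X_a and w^a, w^b onto X^a, X^b. -/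
/-!
Since `Xa ∩ Xb = 0`, the projection onto `Xbᗮ` is injective on the finite-dimensional `Xa`,
hence bounded below there: `‖v‖ ≤ c ‖P_{Xbᗮ} v‖` for `v ∈ Xa`. Applied to `w_a = w - w^a` this
gives `|w_a| ≤ c (|w^b| + |w^a|)`, and the Peetre-type inequalities `⟨xy⟩ ≤ ⟨x⟩⟨y⟩`,
`⟨x + y⟩ ≤ √2 ⟨x⟩⟨y⟩` turn it into `⟨w_a⟩ ≤ C ⟨w^b⟩⟨w^a⟩`, which is the claim raised to the power `μ`.
-/

open Real

lemma sqrt_one_add_sq_mul_le (x y : ℝ) :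
    √(1 + (x * y) ^ 2) ≤ √(1 + x ^ 2) * √(1 + y ^ 2) := by
  rw [← sqrt_mul (by positivity)]
  gcongr
  nlinarith [sq_nonneg x, sq_nonneg y]

lemma sqrt_one_add_sq_add_le (x y : ℝ) :
    √(1 + (x + y) ^ 2) ≤ √2 * (√(1 + x ^ 2) * √(1 + y ^ 2)) := by
  rw [← sqrt_mul (by positivity), ← sqrt_mul zero_le_two]
  gcongr
  nlinarith [sq_nonneg (x - y), sq_nonneg (x * y)]

lemma rpow_neg_le_mul_rpow_neg_mul_rpow {a b d k μ : ℝ} (ha : 0 < a) (hb : 0 < b) (hd : 0 ≤ d)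
    (hk : 0 ≤ k) (hμ : 0 ≤ μ) (h : a ≤ k * b * d) :
    b ^ (-μ) ≤ k ^ μ * a ^ (-μ) * d ^ μ := by
  have hpow : a ^ μ ≤ k ^ μ * b ^ μ * d ^ μ := by
    rw [← mul_rpow hk hb.le, ← mul_rpow (by positivity) hd]
    exact rpow_le_rpow ha.le h hμ
  rw [rpow_neg ha.le, rpow_neg hb.le, inv_le_iff_one_le_mul₀ (rpow_pos_of_pos hb μ)]
  calc (1 : ℝ) = a ^ μ * (a ^ μ)⁻¹ := (mul_inv_cancel₀ (rpow_pos_of_pos ha μ).ne').symm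
    _ ≤ k ^ μ * b ^ μ * d ^ μ * (a ^ μ)⁻¹ := by gcongr
    _ = _ := by ring

namespace Submodule

variable {𝕜 E : Type*} [RCLike 𝕜] [NormedAddCommGroup E] [InnerProductSpace 𝕜 E]

lemma exists_norm_le_mul_norm_starProjection_orthogonal (K L : Submodule 𝕜 E)
    [FiniteDimensional 𝕜 K] [L.HasOrthogonalProjection] (h : K ⊓ L = ⊥) :
    ∃ c > 0, ∀ v ∈ K, ‖v‖ ≤ c * ‖Lᗮ.starProjection v‖ := by
  let f : K →ₗ[𝕜] E := Lᗮ.starProjection.toLinearMap ∘ₗ K.subtype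
  have hker : LinearMap.ker f = ⊥ := by
    refine (LinearMap.ker_eq_bot').2 fun v hv => ?_
    have hvL : (v : E) ∈ L := by
      rw [← L.orthogonal_orthogonal, ← starProjection_apply_eq_zero_iff]
      exact hv
    have hvKL : (v : E) ∈ K ⊓ L := ⟨v.2, hvL⟩
    rw [h, mem_bot] at hvKL
    exact Subtype.ext hvKL
  obtain ⟨c, hc, hf⟩ := f.exists_antilipschitzWith hker
  exact ⟨c, hc, fun v hv => hf.le_mul_norm (map_zero f) ⟨v, hv⟩⟩

lemma exists_norm_starProjection_le_mul_add (K L : Submodule 𝕜 E)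
    [FiniteDimensional 𝕜 K] [L.HasOrthogonalProjection] (h : K ⊓ L = ⊥) :
    ∃ c > 0, ∀ w, ‖K.starProjection w‖ ≤ c * (‖Lᗮ.starProjection w‖ + ‖Kᗮ.starProjection w‖) := by
  obtain ⟨c, hc, hK⟩ := exists_norm_le_mul_norm_starProjection_orthogonal K L h
  refine ⟨c, hc, fun w => (hK _ (K.starProjection_apply_mem w)).trans ?_⟩
  have hsplit : K.starProjection w = w - Kᗮ.starProjection w :=
    eq_sub_of_add_eq (K.starProjection_add_starProjection_orthogonal w)
  gcongr
  calc ‖Lᗮ.starProjection (K.starProjection w)‖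
      = ‖Lᗮ.starProjection w - Lᗮ.starProjection (Kᗮ.starProjection w)‖ := by rw [hsplit, map_sub]
    _ ≤ ‖Lᗮ.starProjection w‖ + ‖Kᗮ.starProjection w‖ :=
      (norm_sub_le _ _).trans (by gcongr; exact norm_starProjection_apply_le _ _)

end Submodule

theorem stmt1_general (n : ℕ) (Xa Xb : Submodule ℝ (EuclideanSpace ℝ (Fin n)))
    (hab : Xa ⊓ Xb = ⊥) (μ : ℝ) (hμ : 0 < μ) :
    ∃ C : ℝ, 0 < C ∧ ∀ w : EuclideanSpace ℝ (Fin n),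
      Real.sqrt (1 + ‖(Submodule.orthogonalProjection Xbᗮ w : EuclideanSpace ℝ (Fin n))‖ ^ 2) ^ (-μ) ≤
      C * Real.sqrt (1 + ‖(Submodule.orthogonalProjection Xa w : EuclideanSpace ℝ (Fin n))‖ ^ 2) ^ (-μ) *
        Real.sqrt (1 + ‖(Submodule.orthogonalProjection Xaᗮ w : EuclideanSpace ℝ (Fin n))‖ ^ 2) ^ μ := by
  obtain ⟨c, hc, hXa⟩ := Submodule.exists_norm_starProjection_le_mul_add Xa Xb hab
  refine ⟨(√(1 + c ^ 2) * √2) ^ μ, by positivity, fun w => ?_⟩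
  simp only [Submodule.coe_orthogonalProjectionOnto_apply]
  set a := ‖Xa.starProjection w‖
  set b := ‖Xbᗮ.starProjection w‖
  set d := ‖Xaᗮ.starProjection w‖
  have hbracket : √(1 + a ^ 2) ≤ √(1 + c ^ 2) * √2 * √(1 + b ^ 2) * √(1 + d ^ 2) :=
    calc √(1 + a ^ 2) ≤ √(1 + (c * (b + d)) ^ 2) := by gcongr; exact hXa w
      _ ≤ √(1 + c ^ 2) * √(1 + (b + d) ^ 2) := sqrt_one_add_sq_mul_le _ _
      _ ≤ √(1 + c ^ 2) * (√2 * (√(1 + b ^ 2) * √(1 + d ^ 2))) := by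
        gcongr; exact sqrt_one_add_sq_add_le _ _
      _ = _ := by ring
  exact rpow_neg_le_mul_rpow_neg_mul_rpow (by positivity) (by positivity) (by positivity)
    (by positivity) hμ.le hbracket

/-- In `ℝⁿ`, with subspaces `Xa, Xb` such that `Xa ⊓ Xb = ⊥` and
`Xaᗮ ⊔ Xbᗮ = ⊤`, for any `μ > 0` there is `C > 0` such that
`⟨w^b⟩^{-μ} ≤ C ⟨w_a⟩^{-μ} ⟨w^a⟩^{μ}` for all `w`, where `w_a` is the orthogonal
projection onto `Xa` and `w^a, w^b` those onto `Xaᗮ, Xbᗮ`. -/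
theorem stmt1 (n : ℕ) (Xa Xb : Submodule ℝ (EuclideanSpace ℝ (Fin n)))
    (hab : Xa ⊓ Xb = ⊥) (hsum : Xaᗮ ⊔ Xbᗮ = ⊤) (μ : ℝ) (hμ : 0 < μ) :
    ∃ C : ℝ, 0 < C ∧ ∀ w : EuclideanSpace ℝ (Fin n),
      Real.sqrt (1 + ‖(Submodule.orthogonalProjection Xbᗮ w : EuclideanSpace ℝ (Fin n))‖ ^ 2) ^ (-μ) ≤
      C * Real.sqrt (1 + ‖(Submodule.orthogonalProjection Xa w : EuclideanSpace ℝ (Fin n))‖ ^ 2) ^ (-μ) *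
        Real.sqrt (1 + ‖(Submodule.orthogonalProjection Xaᗮ w : EuclideanSpace ℝ (Fin n))‖ ^ 2) ^ μ :=
  stmt1_general n Xa Xb hab μ hμ
end

section
/- Let X_a, X^b be as above and suppose V_b : X^b → ℂ satisfies sup |⟨w^b⟩^μ V_b(w^b)| < ∞ for μ > 0, with V_b extended to X by V_b(w) = V_b(w^b). Then there exists C > 0 (depending only on the geometry and μ) such that |V_b(w)| ≤ C · ⟨w_a⟩^{-μ} · ⟨w^a⟩^{μ} · sup|⟨w^b⟩^μ V_b| for all w ∈ X. -/
/-!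
Since `X_a ∩ X_b = {0}`, the projection onto `X^b` is injective on `X_a`, hence (finite dimension)
bounded below there: `|x| ≤ K |x^b|` for `x ∈ X_a`. Splitting `w = w_a + w^a` and using that
projections are contractions gives `|w_a| ≤ K (|w^b| + |w^a|)`, so by Peetre's inequality
`⟨w_a⟩ ≤ √2 K ⟨w^b⟩ ⟨w^a⟩`. Raising this to the power `μ` turns the decay `⟨w^b⟩^{-μ}` of `V_b`
into `⟨w_a⟩^{-μ} ⟨w^a⟩^{μ}`.
-/

open Real

lemma one_add_sq_add_le (b c : ℝ) : 1 + (b + c) ^ 2 ≤ 2 * ((1 + b ^ 2) * (1 + c ^ 2)) := by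
  nlinarith [sq_nonneg (b - c), sq_nonneg (b * c)]

lemma sqrt_one_add_sq_le_of_le_mul_add {K a b c : ℝ} (hK : 1 ≤ K) (ha : 0 ≤ a)
    (h : a ≤ K * (b + c)) :
    √(1 + a ^ 2) ≤ √2 * K * √(1 + b ^ 2) * √(1 + c ^ 2) := by
  have hsq : 1 + a ^ 2 ≤ K ^ 2 * (1 + (b + c) ^ 2) := by
    nlinarith [pow_le_pow_left₀ ha h 2, one_le_pow₀ (n := 2) hK]
  calc √(1 + a ^ 2) ≤ √(K ^ 2 * (2 * ((1 + b ^ 2) * (1 + c ^ 2)))) := by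
        gcongr
        exact hsq.trans (by gcongr; exact one_add_sq_add_le b c)
    _ = √2 * K * √(1 + b ^ 2) * √(1 + c ^ 2) := by
        rw [sqrt_mul (by positivity), sqrt_sq (by positivity), sqrt_mul zero_le_two,
          sqrt_mul (by positivity)]
        ring

lemma rpow_neg_le_of_le_mul_mul {x y z C μ : ℝ} (hx : 0 < x) (hy : 0 < y) (hz : 0 ≤ z)
    (hC : 0 ≤ C) (hμ : 0 ≤ μ) (h : x ≤ C * y * z) :
    y ^ (-μ) ≤ C ^ μ * x ^ (-μ) * z ^ μ := by
  have hxμ : x ^ μ ≤ C ^ μ * y ^ μ * z ^ μ := by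
    rw [← mul_rpow hC hy.le, ← mul_rpow (by positivity) hz]
    exact rpow_le_rpow hx.le h hμ
  rw [rpow_neg hy.le, rpow_neg hx.le, inv_le_iff_one_le_mul₀ (rpow_pos_of_pos hy μ)]
  have hxμ_pos : 0 < x ^ μ := rpow_pos_of_pos hx μ
  calc 1 = x ^ μ * (x ^ μ)⁻¹ := (mul_inv_cancel₀ hxμ_pos.ne').symm
    _ ≤ C ^ μ * y ^ μ * z ^ μ * (x ^ μ)⁻¹ := by gcongr
    _ = C ^ μ * (x ^ μ)⁻¹ * z ^ μ * y ^ μ := by ring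

section Projection

variable {𝕜 E : Type*} [RCLike 𝕜] [NormedAddCommGroup E] [InnerProductSpace 𝕜 E]
  [FiniteDimensional 𝕜 E] {U V : Submodule 𝕜 E}

lemma exists_norm_le_mul_norm_starProjection_orthogonal (h : U ⊓ V = ⊥) :
    ∃ K : ℝ, 1 ≤ K ∧ ∀ x ∈ U, ‖x‖ ≤ K * ‖Vᗮ.starProjection x‖ := by
  let f : U →ₗ[𝕜] E := Vᗮ.starProjection.toLinearMap ∘ₗ U.subtype
  have hker : LinearMap.ker f = ⊥ := by
    refine LinearMap.ker_eq_bot'.mpr fun x hx => ?_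
    have hxV : (x : E) ∈ V := by
      rw [← Submodule.orthogonal_orthogonal V, ← Submodule.starProjection_apply_eq_zero_iff]
      exact hx
    have hx0 : (x : E) ∈ U ⊓ V := ⟨x.2, hxV⟩
    rw [h, Submodule.mem_bot] at hx0
    exact Subtype.ext hx0
  obtain ⟨K₀, -, hK₀⟩ := f.exists_antilipschitzWith hker
  refine ⟨max 1 K₀, le_max_left _ _, fun x hx => ?_⟩
  calc ‖x‖ = ‖(⟨x, hx⟩ : U)‖ := rfl
    _ ≤ K₀ * ‖f ⟨x, hx⟩‖ := hK₀.le_mul_norm (map_zero f) _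
    _ ≤ max 1 K₀ * ‖f ⟨x, hx⟩‖ := by gcongr; exact le_max_right _ _

lemma exists_norm_starProjection_le_mul_add (h : U ⊓ V = ⊥) :
    ∃ K : ℝ, 1 ≤ K ∧ ∀ w : E,
      ‖U.starProjection w‖ ≤ K * (‖Vᗮ.starProjection w‖ + ‖Uᗮ.starProjection w‖) := by
  obtain ⟨K, hK1, hK⟩ := exists_norm_le_mul_norm_starProjection_orthogonal h
  refine ⟨K, hK1, fun w => ?_⟩
  have hsplit : Vᗮ.starProjection (U.starProjection w) =
      Vᗮ.starProjection w - Vᗮ.starProjection (Uᗮ.starProjection w) := by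
    rw [eq_sub_iff_add_eq, ← map_add, U.starProjection_add_starProjection_orthogonal]
  calc ‖U.starProjection w‖ ≤ K * ‖Vᗮ.starProjection (U.starProjection w)‖ :=
        hK _ (U.starProjection_apply_mem w)
    _ ≤ K * (‖Vᗮ.starProjection w‖ + ‖Uᗮ.starProjection w‖) := by
        rw [hsplit]
        gcongr
        exact (norm_sub_le _ _).trans
          (add_le_add le_rfl (Vᗮ.norm_starProjection_apply_le _))

end Projection

theorem stmt2_general (n : ℕ) (Xa Xb : Submodule ℝ (EuclideanSpace ℝ (Fin n)))
    (hab : Xa ⊓ Xb = ⊥) (μ : ℝ) (hμ : 0 < μ) :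
    ∃ C : ℝ, 0 < C ∧ ∀ (Vb : EuclideanSpace ℝ (Fin n) → ℂ) (S : ℝ),
      (∀ w, Vb w = Vb (Submodule.orthogonalProjectionOnto Xbᗮ w : EuclideanSpace ℝ (Fin n))) →
      (∀ w, Real.sqrt (1 + ‖(Submodule.orthogonalProjectionOnto Xbᗮ w :
          EuclideanSpace ℝ (Fin n))‖ ^ 2) ^ μ * ‖Vb w‖ ≤ S) →
      ∀ w, ‖Vb w‖ ≤
        C * Real.sqrt (1 + ‖(Submodule.orthogonalProjectionOnto Xa w :
            EuclideanSpace ℝ (Fin n))‖ ^ 2) ^ (-μ) *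
          Real.sqrt (1 + ‖(Submodule.orthogonalProjectionOnto Xaᗮ w :
            EuclideanSpace ℝ (Fin n))‖ ^ 2) ^ μ * S := by
  obtain ⟨K, hK1, hK⟩ := exists_norm_starProjection_le_mul_add hab
  refine ⟨(√2 * K) ^ μ, by positivity, fun Vb S _ hS w => ?_⟩
  have hbracket := sqrt_one_add_sq_le_of_le_mul_add hK1 (norm_nonneg _) (hK w)
  have hb_pos : 0 < √(1 + ‖Xbᗮ.starProjection w‖ ^ 2) := by positivity
  have hS_nonneg : 0 ≤ S := (by positivity : (0 : ℝ) ≤ _).trans (hS w)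
  calc ‖Vb w‖ ≤ S * √(1 + ‖Xbᗮ.starProjection w‖ ^ 2) ^ (-μ) := by
        rw [rpow_neg hb_pos.le, ← div_eq_mul_inv, le_div_iff₀' (rpow_pos_of_pos hb_pos μ)]
        exact hS w
    _ ≤ S * ((√2 * K) ^ μ * √(1 + ‖Xa.starProjection w‖ ^ 2) ^ (-μ) *
          √(1 + ‖Xaᗮ.starProjection w‖ ^ 2) ^ μ) := by
        gcongr
        exact rpow_neg_le_of_le_mul_mul (by positivity) hb_pos (by positivity) (by positivity)
          hμ.le (by simpa only [mul_assoc] using hbracket)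
    _ = (√2 * K) ^ μ * √(1 + ‖Xa.starProjection w‖ ^ 2) ^ (-μ) *
          √(1 + ‖Xaᗮ.starProjection w‖ ^ 2) ^ μ * S := by ring

/-- If `Vb` depends only on the projection `w^b` onto `Xbᗮ` and satisfies
`⟨w^b⟩^μ |Vb| ≤ S` for all `w`, then there exists `C > 0` (depending only on the geometry
and `μ`) such that `|Vb(w)| ≤ C ⟨w_a⟩^{-μ} ⟨w^a⟩^{μ} S` for all `w`. -/
theorem stmt2 (n : ℕ) (Xa Xb : Submodule ℝ (EuclideanSpace ℝ (Fin n)))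
    (hab : Xa ⊓ Xb = ⊥) (hsum : Xaᗮ ⊔ Xbᗮ = ⊤) (μ : ℝ) (hμ : 0 < μ) :
    ∃ C : ℝ, 0 < C ∧ ∀ (Vb : EuclideanSpace ℝ (Fin n) → ℂ) (S : ℝ),
      (∀ w, Vb w = Vb (Submodule.orthogonalProjectionOnto Xbᗮ w : EuclideanSpace ℝ (Fin n))) →
      (∀ w, Real.sqrt (1 + ‖(Submodule.orthogonalProjectionOnto Xbᗮ w :
          EuclideanSpace ℝ (Fin n))‖ ^ 2) ^ μ * ‖Vb w‖ ≤ S) →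
      ∀ w, ‖Vb w‖ ≤
        C * Real.sqrt (1 + ‖(Submodule.orthogonalProjectionOnto Xa w :
            EuclideanSpace ℝ (Fin n))‖ ^ 2) ^ (-μ) *
          Real.sqrt (1 + ‖(Submodule.orthogonalProjectionOnto Xaᗮ w :
            EuclideanSpace ℝ (Fin n))‖ ^ 2) ^ μ * S :=
  stmt2_general n Xa Xb hab μ hμ
end

section
/- Let ε_α < 0, ν, ρ_⊥ ∈ X_a = ℝᵐ with |ν| = 1, ν·ρ_⊥ = 0, z ∈ ℂ with Im z ≠ 0, ρ = zν + ρ_⊥, and define F_ρ(ξ) = ε_α − |ξ|² − 2ρ·ξ for ξ ∈ X_a (complex bilinear extension of the dot product). If F_ρ(ξ) is real, then ν·ξ = 0 and F_ρ(ξ) = ε_α + |ρ_⊥|² − |ξ + ρ_⊥|² ≤ ε_α + |ρ_⊥|². -/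
open RealInnerProductSpace

/-- With `ρ = zν + ρ⊥`, `|ν| = 1`, `ν·ρ⊥ = 0`, `Im z ≠ 0`, and
`F_ρ(ξ) = ε_α − |ξ|² − 2ρ·ξ` (complex-bilinear dot product): if `F_ρ(ξ)` is real then
`ν·ξ = 0` and `F_ρ(ξ) = ε_α + |ρ⊥|² − |ξ + ρ⊥|² ≤ ε_α + |ρ⊥|²`. -/
theorem stmt4 (m : ℕ) (ε : ℝ) (ν ρp : EuclideanSpace ℝ (Fin m)) (z : ℂ)
    (hν : ‖ν‖ = 1) (horth : ⟪ν, ρp⟫ = 0) (hz : z.im ≠ 0)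
    (F : EuclideanSpace ℝ (Fin m) → ℂ)
    (hF : ∀ ξ, F ξ = (ε : ℂ) - ((‖ξ‖ ^ 2 : ℝ) : ℂ) -
      2 * (z * ((⟪ν, ξ⟫ : ℝ) : ℂ) + ((⟪ρp, ξ⟫ : ℝ) : ℂ)))
    (ξ : EuclideanSpace ℝ (Fin m)) (hreal : (F ξ).im = 0) :
    ⟪ν, ξ⟫ = 0 ∧ F ξ = ((ε + ‖ρp‖ ^ 2 - ‖ξ + ρp‖ ^ 2 : ℝ) : ℂ) ∧
      ε + ‖ρp‖ ^ 2 - ‖ξ + ρp‖ ^ 2 ≤ ε + ‖ρp‖ ^ 2 := by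
  have him : (F ξ).im = -2 * (z.im * ⟪ν, ξ⟫) := by
    rw [hF]
    simp only [Complex.sub_im, Complex.mul_im, Complex.add_im, Complex.ofReal_im,
      Complex.ofReal_re, Complex.add_re,
      Complex.mul_re]
    norm_num
  have hνξ : ⟪ν, ξ⟫ = 0 := by
    rw [him] at hreal
    rcases mul_eq_zero.mp (by linarith : z.im * ⟪ν, ξ⟫ = 0) with h | h
    · exact absurd h hz
    · exact h
  have hnorm : ‖ξ + ρp‖ ^ 2 = ‖ξ‖ ^ 2 + 2 * ⟪ρp, ξ⟫ + ‖ρp‖ ^ 2 := by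
    rw [@norm_add_sq_real, real_inner_comm]
  refine ⟨hνξ, ?_, by nlinarith [sq_nonneg ‖ξ + ρp‖]⟩
  rw [hF, hνξ, hnorm]
  push_cast
  ring_nf
end

section
/- With F_ρ as above and Re z ≠ 0, Im z ≠ 0: if Re F_ρ(ξ) > ε_α + |ρ_⊥|², then Im F_ρ(ξ) ≠ 0 and (Re z / Im z) · Im F_ρ(ξ) > 0; moreover the quantitative bound |Im F_ρ(ξ)| > (Re F_ρ(ξ) − (ε_α + |ρ_⊥|²)) · |Im z| / |Re z| holds. -/
open RealInnerProductSpace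

/-- With `F_ρ` as before and `Re z ≠ 0`, `Im z ≠ 0`: if
`Re F_ρ(ξ) > ε_α + |ρ⊥|²` then `Im F_ρ(ξ) ≠ 0`, `(Re z/Im z)·Im F_ρ(ξ) > 0`, and
`|Im F_ρ(ξ)| > (Re F_ρ(ξ) − (ε_α + |ρ⊥|²))·|Im z|/|Re z|`. -/
theorem stmt6 (m : ℕ) (ε : ℝ) (ν ρp : EuclideanSpace ℝ (Fin m)) (z : ℂ)
    (hν : ‖ν‖ = 1) (horth : ⟪ν, ρp⟫ = 0) (hre : z.re ≠ 0) (him : z.im ≠ 0)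
    (F : EuclideanSpace ℝ (Fin m) → ℂ)
    (hF : ∀ ξ, F ξ = (ε : ℂ) - ((‖ξ‖ ^ 2 : ℝ) : ℂ) -
      2 * (z * ((⟪ν, ξ⟫ : ℝ) : ℂ) + ((⟪ρp, ξ⟫ : ℝ) : ℂ)))
    (ξ : EuclideanSpace ℝ (Fin m)) (hRe : (F ξ).re > ε + ‖ρp‖ ^ 2) :
    (F ξ).im ≠ 0 ∧ (z.re / z.im) * (F ξ).im > 0 ∧
      |(F ξ).im| > ((F ξ).re - (ε + ‖ρp‖ ^ 2)) * |z.im| / |z.re| := by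
  have hFξ := hF ξ
  set t : ℝ := ⟪ν, ξ⟫ with ht
  set s : ℝ := ⟪ρp, ξ⟫ with hs
  have hRe' : (F ξ).re = ε - ‖ξ‖ ^ 2 - 2 * (z.re * t + s) := by
    rw [hFξ]; simp [Complex.mul_re, Complex.mul_im, -Complex.ofReal_pow]
  have hIm' : (F ξ).im = -2 * (z.im * t) := by
    rw [hFξ]; simp [Complex.mul_im, -Complex.ofReal_pow]
  -- key norm inequality
  have hsq : (0:ℝ) ≤ ‖ρp + ξ‖ ^ 2 := sq_nonneg _
  have hexp : ‖ρp + ξ‖ ^ 2 = ‖ρp‖ ^ 2 + 2 * s + ‖ξ‖ ^ 2 := by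
    rw [@norm_add_sq_real]
  have hweak : -2 * (z.re * t) ≥ (F ξ).re - (ε + ‖ρp‖ ^ 2) := by
    nlinarith [hsq, hexp, hRe']
  have hδ : (F ξ).re - (ε + ‖ρp‖ ^ 2) > 0 := by linarith
  have htne : t ≠ 0 := by
    intro h; rw [h] at hweak; simp at hweak; linarith
  have hne : ρp + ξ ≠ 0 := by
    intro h
    have : ξ = -ρp := by
      have := congrArg (fun v => -ρp + v) h
      simpa [← add_assoc] using this
    rw [ht, this, inner_neg_right, horth] at htne
    simp at htne
  have hnp : (0:ℝ) < ‖ρp + ξ‖ := norm_pos_iff.mpr hne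
  have hsqpos : (0:ℝ) < ‖ρp + ξ‖ ^ 2 := by positivity
  have hstrict : -2 * (z.re * t) > (F ξ).re - (ε + ‖ρp‖ ^ 2) := by
    nlinarith [hsqpos, hexp, hRe']
  refine ⟨?_, ?_, ?_⟩
  · rw [hIm']
    intro h
    have : z.im * t = 0 := by linarith
    exact (mul_ne_zero him htne) this
  · rw [hIm']
    have : z.re / z.im * (-2 * (z.im * t)) = -2 * (z.re * t) := by
      field_simp
    rw [this]; linarith
  · rw [hIm', abs_mul, abs_mul]
    have hrepos : (0:ℝ) < |z.re| := abs_pos.mpr hre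
    have himpos : (0:ℝ) < |z.im| := abs_pos.mpr him
    rw [gt_iff_lt, div_lt_iff₀ hrepos]
    have h1 : -2 * (z.re * t) ≤ 2 * (|z.re| * |t|) := by
      nlinarith [le_abs_self (-(z.re * t)), abs_neg (z.re * t), abs_mul z.re t]
    have h2 : ((F ξ).re - (ε + ‖ρp‖ ^ 2)) < 2 * (|z.re| * |t|) := by linarith
    have : |(-2 : ℝ)| = 2 := by norm_num
    rw [this]
    nlinarith [himpos, h2]
end

section
/- With F_ρ as above (dim X_a ≥ 2, Im z ≠ 0), the map F_ρ : X_a → ℂ ≅ ℝ² has surjective differential at ξ unless ξ_⊥ = −ρ_⊥, where ξ_⊥ is the component of ξ orthogonal to ν. Equivalently, d(Im F_ρ) and d(Re F_ρ) are linearly independent at ξ iff ξ_⊥ ≠ −ρ_⊥. -/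
open RealInnerProductSpace

/-!
Writing `c = ⟪ν, ξ⟫` and `w = ξ⊥ + ρ⊥`, the differential of `F` at `ξ` is
`h ↦ -2 (⟪w, h⟫ + (c + z) ⟪ν, h⟫)` with `w ⊥ ν`. Since `Im (c + z) ≠ 0`, the numbers `1` and
`c + z` form a real basis of `ℂ`, so the differential is onto iff `h ↦ (⟪w, h⟫, ⟪ν, h⟫)` is onto
`ℝ²`, which for orthogonal `w` and `ν ≠ 0` happens iff `w ≠ 0`.
-/

variable {E : Type*} [NormedAddCommGroup E] [InnerProductSpace ℝ E]

theorem Complex.exists_ofReal_add_mul_ofReal_eq {ζ : ℂ} (hζ : ζ.im ≠ 0) (u : ℂ) :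
    ∃ x y : ℝ, (x : ℂ) + ζ * y = u :=
  ⟨u.re - u.im / ζ.im * ζ.re, u.im / ζ.im,
    Complex.ext (by simp [mul_comm]) (by simp [mul_div_cancel₀ _ hζ])⟩

theorem exists_inner_eq_and_inner_eq {w ν : E} (hw : w ≠ 0) (hν : ν ≠ 0) (hwν : ⟪w, ν⟫ = 0)
    (x y : ℝ) : ∃ h : E, ⟪w, h⟫ = x ∧ ⟪ν, h⟫ = y := by
  refine ⟨(x / ‖w‖ ^ 2) • w + (y / ‖ν‖ ^ 2) • ν, ?_, ?_⟩ <;>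
    simp [inner_add_right, real_inner_smul_right, hwν, real_inner_comm w ν, hw, hν]

theorem surjective_inner_add_mul_inner_iff {w ν : E} (hν : ν ≠ 0) (hwν : ⟪w, ν⟫ = 0) {ζ : ℂ}
    (hζ : ζ.im ≠ 0) :
    Function.Surjective (fun h : E => (⟪w, h⟫ : ℂ) + ζ * ⟪ν, h⟫) ↔ w ≠ 0 := by
  constructor
  · rintro hsurj rfl
    obtain ⟨h, hh⟩ := hsurj (ζ * Complex.I)
    have hζ0 : ζ ≠ 0 := fun h0 => hζ (by simp [h0])
    have hI : ((⟪ν, h⟫ : ℝ) : ℂ) = Complex.I := mul_left_cancel₀ hζ0 (by simpa using hh)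
    simpa using congrArg Complex.im hI
  · intro hw u
    obtain ⟨x, y, rfl⟩ := Complex.exists_ofReal_add_mul_ofReal_eq hζ u
    obtain ⟨h, hx, hy⟩ := exists_inner_eq_and_inner_eq hw hν hwν x y
    exact ⟨h, by simp [hx, hy]⟩

theorem hasFDerivAt_const_sub_normSq_sub_inner (ε z : ℂ) (a b ξ : E) :
    HasFDerivAt
      (fun x : E => ε - ((‖x‖ ^ 2 : ℝ) : ℂ) - 2 * (z * ((⟪b, x⟫ : ℝ) : ℂ) + ((⟪a, x⟫ : ℝ) : ℂ)))
      ((-2 : ℂ) • (Complex.ofRealCLM.comp (innerSL ℝ (ξ + a)) +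
        z • Complex.ofRealCLM.comp (innerSL ℝ b))) ξ := by
  have hnorm := Complex.ofRealCLM.hasFDerivAt.comp ξ (hasStrictFDerivAt_norm_sq ξ).hasFDerivAt
  have hb := Complex.ofRealCLM.hasFDerivAt.comp ξ (innerSL ℝ b).hasFDerivAt
  have ha := Complex.ofRealCLM.hasFDerivAt.comp ξ (innerSL ℝ a).hasFDerivAt
  refine ((hnorm.const_sub ε).sub (((hb.const_mul z).add ha).const_mul 2)).congr_fderiv ?_
  ext h
  simp only [ContinuousLinearMap.comp_apply, add_apply, sub_apply, neg_apply, smul_apply,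
    coe_innerSL_apply, Complex.ofRealCLM_apply, inner_add_left, smul_eq_mul, nsmul_eq_mul]
  push_cast
  ring

theorem stmt7_general (m : ℕ) (ε : ℝ) (ν ρp : EuclideanSpace ℝ (Fin m)) (z : ℂ)
    (hν : ‖ν‖ = 1) (horth : ⟪ν, ρp⟫ = 0) (hz : z.im ≠ 0)
    (F : EuclideanSpace ℝ (Fin m) → ℂ)
    (hF : ∀ ξ, F ξ = (ε : ℂ) - ((‖ξ‖ ^ 2 : ℝ) : ℂ) -
      2 * (z * ((⟪ν, ξ⟫ : ℝ) : ℂ) + ((⟪ρp, ξ⟫ : ℝ) : ℂ)))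
    (ξ : EuclideanSpace ℝ (Fin m)) :
    Function.Surjective (fderiv ℝ F ξ) ↔ ξ - ⟪ν, ξ⟫ • ν ≠ -ρp := by
  set c := ⟪ν, ξ⟫
  set w := ξ - c • ν + ρp
  have hwν : ⟪w, ν⟫ = 0 := by
    rw [real_inner_comm, inner_add_right, inner_sub_right, real_inner_smul_right,
      real_inner_self_eq_norm_sq, hν, horth]
    ring
  have hcz : ((c : ℂ) + z).im ≠ 0 := by simpa using hz
  have hν0 : ν ≠ 0 := norm_ne_zero_iff.mp (by simp [hν])
  have hderiv : ⇑(fderiv ℝ F ξ) = Equiv.mulLeft₀ (-2 : ℂ) (by norm_num) ∘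
      fun h => (⟪w, h⟫ : ℂ) + (c + z) * ⟪ν, h⟫ := by
    rw [funext hF, (hasFDerivAt_const_sub_normSq_sub_inner (ε : ℂ) z ρp ν ξ).fderiv]
    have hξ : ξ + ρp = w + c • ν := by simp only [w]; abel
    ext h
    simp only [hξ, Function.comp_apply, Equiv.mulLeft₀_apply, add_apply, smul_apply,
      ContinuousLinearMap.comp_apply, coe_innerSL_apply, Complex.ofRealCLM_apply, inner_add_left,
      real_inner_smul_left, smul_eq_mul]
    push_cast
    ring
  rw [hderiv, EquivLike.comp_surjective, surjective_inner_add_mul_inner_iff hν0 hwν hcz, ne_eq,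
    ne_eq, add_eq_zero_iff_eq_neg]

/-- With `dim X_a = m ≥ 2` and `Im z ≠ 0`, the map `F_ρ : X_a → ℂ ≅ ℝ²` has
surjective differential at `ξ` iff `ξ⊥ ≠ −ρ⊥`, where `ξ⊥ = ξ − (ν·ξ)ν`. -/
theorem stmt7 (m : ℕ) (hm : 2 ≤ m) (ε : ℝ) (ν ρp : EuclideanSpace ℝ (Fin m)) (z : ℂ)
    (hν : ‖ν‖ = 1) (horth : ⟪ν, ρp⟫ = 0) (hz : z.im ≠ 0)
    (F : EuclideanSpace ℝ (Fin m) → ℂ)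
    (hF : ∀ ξ, F ξ = (ε : ℂ) - ((‖ξ‖ ^ 2 : ℝ) : ℂ) -
      2 * (z * ((⟪ν, ξ⟫ : ℝ) : ℂ) + ((⟪ρp, ξ⟫ : ℝ) : ℂ)))
    (ξ : EuclideanSpace ℝ (Fin m)) :
    Function.Surjective (fderiv ℝ F ξ) ↔ ξ - ⟪ν, ξ⟫ • ν ≠ -ρp :=
  stmt7_general m ε ν ρp z hν horth hz F hF ξ
end

section
/- Let μ > 0 and suppose the multiplication operator I_a on ℝⁿ = X_a ⊕ X^a satisfies |I_a(w)| ≤ K ⟨w_a⟩^{-μ} ⟨w^a⟩^{μ}, and let ψ', ψ'' ∈ L²(X^a) decay exponentially (e^{ν|w^a|}ψ', e^{ν|w^a|}ψ'' ∈ L²(X^a) for some ν > 0). Then the function w_a ↦ ⟨w_a⟩^μ ∫_{X^a} I_a(w_a, w^a) conj(ψ'(w^a)) ψ''(w^a) dw^a is bounded on X_a. -/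
/-!
The factor `⟨w_a⟩^μ` cancels the decay `⟨w_a⟩^{-μ}` of `I_a`, so it suffices to bound
`∫ ⟨x⟩^μ |ψ'| |ψ''|` uniformly. The polynomial weight `⟨x⟩^μ` is dominated by `C e^{2ν|x|}`, and
`e^{ν|x|} |ψ'| · e^{ν|x|} |ψ''|` is integrable by Cauchy–Schwarz.
-/

open MeasureTheory

section JapaneseBracket

variable {E : Type*} [NormedAddCommGroup E]

lemma one_add_le_inv_mul_exp {ε : ℝ} (hε : 0 < ε) (hε₁ : ε ≤ 1) (t : ℝ) :
    1 + t ≤ ε⁻¹ * Real.exp (ε * t) := by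
  rw [le_inv_mul_iff₀ hε]
  nlinarith [Real.add_one_le_exp (ε * t)]

lemma sqrt_one_add_norm_sq_rpow_le_mul_exp (μ : ℝ) {ν : ℝ} (hν : 0 < ν) :
    ∃ C : ℝ, ∀ x : E, Real.sqrt (1 + ‖x‖ ^ 2) ^ μ ≤ C * Real.exp (ν * ‖x‖) := by
  set a := |μ|
  -- `ε` is chosen so that `e^{ε|x|}` raised to the power `|μ|` still grows at most like `e^{ν|x|}`.
  set ε := ν / (a + ν)
  have ha : 0 ≤ a := abs_nonneg μ
  have hε : 0 < ε := by positivity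
  have hε₁ : ε ≤ 1 := div_le_one_of_le₀ (by linarith) (by positivity)
  have haε : a * ε ≤ ν := by
    rw [mul_div_assoc', div_le_iff₀ (by positivity)]
    nlinarith
  refine ⟨ε⁻¹ ^ a, fun x => ?_⟩
  have h1 : 1 ≤ Real.sqrt (1 + ‖x‖ ^ 2) := Real.one_le_sqrt.mpr (by nlinarith [norm_nonneg x])
  calc Real.sqrt (1 + ‖x‖ ^ 2) ^ μ
      ≤ Real.sqrt (1 + ‖x‖ ^ 2) ^ a := Real.rpow_le_rpow_of_exponent_le h1 (le_abs_self μ)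
    _ ≤ (ε⁻¹ * Real.exp (ε * ‖x‖)) ^ a := by
        gcongr
        exact (sqrt_one_add_norm_sq_le x).trans (one_add_le_inv_mul_exp hε hε₁ _)
    _ = ε⁻¹ ^ a * Real.exp (a * ε * ‖x‖) := by
        rw [Real.mul_rpow (by positivity) (by positivity), ← Real.exp_mul]
        ring_nf
    _ ≤ ε⁻¹ ^ a * Real.exp (ν * ‖x‖) := by
        gcongr

end JapaneseBracket

lemma norm_mul_conj_mul_le {z a b : ℂ} {A ρ C r : ℝ} (hA : 0 ≤ A) (hr : 0 ≤ r)
    (hz : ‖z‖ ≤ A * ρ) (hρ : ρ ≤ C * r ^ 2) :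
    ‖z * (starRingEnd ℂ) a * b‖ ≤ A * C * (‖r • a‖ * ‖r • b‖) := by
  rw [norm_mul, norm_mul, RCLike.norm_conj, norm_smul, norm_smul, Real.norm_of_nonneg hr]
  calc ‖z‖ * ‖a‖ * ‖b‖ ≤ A * (C * r ^ 2) * ‖a‖ * ‖b‖ := by
        gcongr
        exact hz.trans (mul_le_mul_of_nonneg_left hρ hA)
    _ = A * C * (r * ‖a‖ * (r * ‖b‖)) := by ring

theorem stmt15_general (m k : ℕ) (μ ν K : ℝ) (hν : 0 < ν)
    (Ia : EuclideanSpace ℝ (Fin m) × EuclideanSpace ℝ (Fin k) → ℂ)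
    (hIa : ∀ w, ‖Ia w‖ ≤ K * Real.sqrt (1 + ‖w.1‖ ^ 2) ^ (-μ) *
      Real.sqrt (1 + ‖w.2‖ ^ 2) ^ μ)
    (ψ' ψ'' : EuclideanSpace ℝ (Fin k) → ℂ)
    (hψ' : MemLp (fun x => Real.exp (ν * ‖x‖) • ψ' x) 2 volume)
    (hψ'' : MemLp (fun x => Real.exp (ν * ‖x‖) • ψ'' x) 2 volume) :
    ∃ B : ℝ, ∀ wa : EuclideanSpace ℝ (Fin m),
      ‖(Real.sqrt (1 + ‖wa‖ ^ 2) ^ μ : ℝ) •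
        ∫ x : EuclideanSpace ℝ (Fin k),
          Ia (wa, x) * (starRingEnd ℂ) (ψ' x) * ψ'' x‖ ≤ B := by
  obtain ⟨C, hC⟩ := sqrt_one_add_norm_sq_rpow_le_mul_exp (E := EuclideanSpace ℝ (Fin k)) μ
    (by positivity : 0 < 2 * ν)
  set g := fun x => ‖Real.exp (ν * ‖x‖) • ψ' x‖ * ‖Real.exp (ν * ‖x‖) • ψ'' x‖
  have hg : Integrable g := hψ'.norm.integrable_mul hψ''.norm
  refine ⟨K * C * ∫ x, g x, fun wa => ?_⟩
  set s := Real.sqrt (1 + ‖wa‖ ^ 2)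
  have hs : 0 < s := Real.sqrt_pos.mpr (by positivity)
  have hKs : 0 ≤ K * s ^ (-μ) := by simpa using (norm_nonneg _).trans (hIa (wa, 0))
  have hpointwise (x) : ‖Ia (wa, x) * (starRingEnd ℂ) (ψ' x) * ψ'' x‖ ≤
      K * s ^ (-μ) * C * g x := by
    refine norm_mul_conj_mul_le hKs (Real.exp_nonneg _) (hIa (wa, x)) ((hC x).trans_eq ?_)
    rw [← Real.exp_nat_mul]; ring_nf
  calc ‖s ^ μ • ∫ x, Ia (wa, x) * (starRingEnd ℂ) (ψ' x) * ψ'' x‖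
      ≤ s ^ μ * ∫ x, K * s ^ (-μ) * C * g x := by
        rw [norm_smul, Real.norm_of_nonneg (by positivity)]
        gcongr
        exact norm_integral_le_of_norm_le (hg.const_mul _) (ae_of_all _ hpointwise)
    _ = K * C * ∫ x, g x := by
        rw [integral_const_mul, Real.rpow_neg hs.le]
        field_simp

/-- If `|I_a(w)| ≤ K ⟨w_a⟩^{-μ} ⟨w^a⟩^{μ}` and `ψ', ψ''` decay
exponentially in `L²(X^a)`, then `w_a ↦ ⟨w_a⟩^μ ∫_{X^a} I_a(w_a, w^a) conj(ψ') ψ'' dw^a`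
is bounded on `X_a`. -/
theorem stmt15 (m k : ℕ) (μ ν K : ℝ) (hμ : 0 < μ) (hν : 0 < ν)
    (Ia : EuclideanSpace ℝ (Fin m) × EuclideanSpace ℝ (Fin k) → ℂ)
    (hIa_meas : Measurable Ia)
    (hIa : ∀ w, ‖Ia w‖ ≤ K * Real.sqrt (1 + ‖w.1‖ ^ 2) ^ (-μ) *
      Real.sqrt (1 + ‖w.2‖ ^ 2) ^ μ)
    (ψ' ψ'' : EuclideanSpace ℝ (Fin k) → ℂ)
    (hψ' : MemLp (fun x => Real.exp (ν * ‖x‖) • ψ' x) 2 volume)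
    (hψ'' : MemLp (fun x => Real.exp (ν * ‖x‖) • ψ'' x) 2 volume) :
    ∃ B : ℝ, ∀ wa : EuclideanSpace ℝ (Fin m),
      ‖(Real.sqrt (1 + ‖wa‖ ^ 2) ^ μ : ℝ) •
        ∫ x : EuclideanSpace ℝ (Fin k),
          Ia (wa, x) * (starRingEnd ℂ) (ψ' x) * ψ'' x‖ ≤ B :=
  stmt15_general m k μ ν K hν Ia hIa ψ' ψ'' hψ' hψ''
end
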